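/- Let θ ∈ (0, π/2) and let u be a model eigenfunction of H(θ) with eigenvalue σ. Then ∫_{ℝ²₊} V_θ ∂_s u · u ds dt = (sin θ)/2 and ∫_{ℝ²₊} V_θ ∂_s² u · u ds dt = 0. -/

import Mathlib

open Real MeasureTheory Set

noncomputable section

/-- Partial derivative with respect to the first variable. -/
def pd1 (u : ℝ → ℝ → ℝ) : ℝ → ℝ → ℝ := fun s t => deriv (fun x => u x t) s

/-- Partial derivative with respect to the second variable. -/
def pd2 (u : ℝ → ℝ → ℝ) : ℝ → ℝ → ℝ := fun s t => deriv (fun y => u s y) t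

/-- The potential `V_θ(s,t) = t cos θ − s sin θ`. -/
def Vpot (θ : ℝ) : ℝ → ℝ → ℝ := fun s t => t * Real.cos θ - s * Real.sin θ

/-- The operator `H(θ) = −∂_s² − ∂_t² + V_θ²` applied to `u`. -/
def Hop (θ : ℝ) (u : ℝ → ℝ → ℝ) : ℝ → ℝ → ℝ :=
  fun s t => - pd1 (pd1 u) s t - pd2 (pd2 u) s t + (Vpot θ s t)^2 * u s t

/-- Integral over the half-plane `{t > 0}` with respect to `ds dt`. -/
def intHalf (f : ℝ → ℝ → ℝ) : ℝ := ∫ s : ℝ, ∫ t in Set.Ioi (0:ℝ), f s t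

/-- Schwartz-class on the closed half-plane: all iterated partial derivatives decay
faster than any power of `|s| + t`. -/
def SchwartzHalf (u : ℝ → ℝ → ℝ) : Prop :=
  ∀ k l n : ℕ, ∃ C : ℝ, ∀ s t : ℝ, 0 ≤ t →
    |pd1^[k] (pd2^[l] u) s t| ≤ C * (1 + |s| + t) ^ (-(n:ℝ))

/-- A model eigenfunction of `H(θ)` with eigenvalue `σ`: smooth up to the boundary,
Schwartz-class, `L²`-normalized, Neumann boundary condition, and `H(θ)u = σu` on `{t ≥ 0}`. -/
structure IsModelEigen (θ : ℝ) (u : ℝ → ℝ → ℝ) (σ : ℝ) : Prop where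
  smooth : ∀ n : ℕ, ContDiff ℝ n (fun p : ℝ × ℝ => u p.1 p.2)
  schwartz : SchwartzHalf u
  normalized : intHalf (fun s t => (u s t)^2) = 1
  neumann : ∀ s : ℝ, pd2 u s 0 = 0
  eigen : ∀ s t : ℝ, 0 ≤ t → Hop θ u s t = σ * u s t

/-! Both identities come from integrating by parts in `s`, where no boundary terms occur, using
`∂_s V_θ = -sin θ`: this gives `∫ V_θ ∂_s u · u = (sin θ / 2) ∫ u²` and
`∫ V_θ ∂_s²u · u = -∫ V_θ (∂_s u)²`. The last integral vanishes because differentiating the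
eigenvalue equation in `s` gives `(H(θ) - σ) ∂_s u = 2 sin θ V_θ u`. Pairing this with `∂_s²u`,
the term `∫ ∂_s ∂_t² u · ∂_s² u` vanishes after integrating by parts in `t` (the boundary term
contains `∂_s ∂_t u (s, 0) = 0` by the Neumann condition) and then in `s`, and the remaining terms
add up to `3 sin θ ∫ V_θ (∂_s u)² = 0`. -/

open Function
open scoped ContDiff

section PartialDerivatives

variable {f : ℝ → ℝ → ℝ}

theorem hasDerivAt_pd1 {s t : ℝ} (hf : DifferentiableAt ℝ (uncurry f) (s, t)) :
    HasDerivAt (fun x => f x t) (pd1 f s t) s :=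
  (hf.comp (𝕜 := ℝ) (g := uncurry f) s
    (differentiableAt_id.prodMk (differentiableAt_const t))).hasDerivAt

theorem hasDerivAt_pd2 {s t : ℝ} (hf : DifferentiableAt ℝ (uncurry f) (s, t)) :
    HasDerivAt (fun y => f s y) (pd2 f s t) t :=
  (hf.comp (𝕜 := ℝ) (g := uncurry f) t
    ((differentiableAt_const s).prodMk differentiableAt_id)).hasDerivAt

theorem pd1_eq_fderiv {s t : ℝ} (hf : DifferentiableAt ℝ (uncurry f) (s, t)) :
    pd1 f s t = fderiv ℝ (uncurry f) (s, t) (1, 0) :=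
  (hf.hasFDerivAt.comp_hasDerivAt (l := uncurry f) s
    ((hasDerivAt_id s).prodMk (hasDerivAt_const s t))).deriv

theorem pd2_eq_fderiv {s t : ℝ} (hf : DifferentiableAt ℝ (uncurry f) (s, t)) :
    pd2 f s t = fderiv ℝ (uncurry f) (s, t) (0, 1) :=
  (hf.hasFDerivAt.comp_hasDerivAt (l := uncurry f) t
    ((hasDerivAt_const t s).prodMk (hasDerivAt_id t))).deriv

theorem uncurry_pd1_eq (hf : Differentiable ℝ (uncurry f)) :
    uncurry (pd1 f) = fun p => fderiv ℝ (uncurry f) p (1, 0) :=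
  funext fun p => pd1_eq_fderiv (hf p)

theorem uncurry_pd2_eq (hf : Differentiable ℝ (uncurry f)) :
    uncurry (pd2 f) = fun p => fderiv ℝ (uncurry f) p (0, 1) :=
  funext fun p => pd2_eq_fderiv (hf p)

theorem ContDiff.uncurry_pd1 (hf : ContDiff ℝ ∞ (uncurry f)) : ContDiff ℝ ∞ (uncurry (pd1 f)) := by
  rw [uncurry_pd1_eq (hf.differentiable (by simp))]
  exact (hf.fderiv_right (m := ∞) (by exact_mod_cast le_top)).clm_apply contDiff_const

theorem ContDiff.uncurry_pd2 (hf : ContDiff ℝ ∞ (uncurry f)) : ContDiff ℝ ∞ (uncurry (pd2 f)) := by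
  rw [uncurry_pd2_eq (hf.differentiable (by simp))]
  exact (hf.fderiv_right (m := ∞) (by exact_mod_cast le_top)).clm_apply contDiff_const

theorem pd2_pd1 (hf : ContDiff ℝ ∞ (uncurry f)) : pd2 (pd1 f) = pd1 (pd2 f) := by
  have hf1 : Differentiable ℝ (uncurry f) := hf.differentiable (by simp)
  have hf2 : Differentiable ℝ (fderiv ℝ (uncurry f)) :=
    (hf.fderiv_right (m := ∞) (by exact_mod_cast le_top)).differentiable (by simp)
  ext s t
  rw [pd2_eq_fderiv (hf.uncurry_pd1.differentiable (by simp) _), uncurry_pd1_eq hf1,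
    pd1_eq_fderiv (hf.uncurry_pd2.differentiable (by simp) _), uncurry_pd2_eq hf1,
    fderiv_clm_apply (hf2 _) (differentiableAt_const _),
    fderiv_clm_apply (hf2 _) (differentiableAt_const _)]
  have h2 : minSmoothness ℝ 2 ≤ ∞ := by
    rw [minSmoothness_of_isRCLikeNormedField]; exact WithTop.coe_le_coe.mpr le_top
  simpa using (hf.contDiffAt.isSymmSndFDerivAt h2 (1, 0) (0, 1)).symm

theorem pd2_iterate_pd1 (hf : ContDiff ℝ ∞ (uncurry f)) (l : ℕ) :
    pd2^[l] (pd1 f) = pd1 (pd2^[l] f) := by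
  induction l generalizing f with
  | zero => rfl
  | succ l ih => rw [iterate_succ_apply, iterate_succ_apply, pd2_pd1 hf, ih hf.uncurry_pd2]

end PartialDerivatives

structure RapidDecay (f : ℝ → ℝ → ℝ) : Prop where
  continuous : Continuous (uncurry f)
  bound : ∀ n : ℕ, ∃ C : ℝ, ∀ s t : ℝ, 0 ≤ t → |f s t| ≤ C * (1 + |s| + t) ^ (-(n : ℝ))

def halfPlane : Measure (ℝ × ℝ) := volume.prod (volume.restrict (Ioi 0))

def IntegrableHalf (f : ℝ → ℝ → ℝ) : Prop := Integrable (uncurry f) halfPlane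

theorem halfPlane_eq_restrict : halfPlane = volume.restrict (univ ×ˢ Ioi 0) := by
  rw [halfPlane, Measure.volume_eq_prod ℝ ℝ, ← Measure.prod_restrict, Measure.restrict_univ]

theorem abs_vpot_le (θ : ℝ) {s t : ℝ} (ht : 0 ≤ t) : |Vpot θ s t| ≤ 1 + |s| + t := by
  have hc : |t * cos θ| ≤ t := by
    rw [abs_mul, abs_of_nonneg ht]; exact mul_le_of_le_one_right ht (abs_cos_le_one θ)
  have hs : |s * sin θ| ≤ |s| := by
    rw [abs_mul]; exact mul_le_of_le_one_right (abs_nonneg s) (abs_sin_le_one θ)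
  have := abs_sub (t * cos θ) (s * sin θ)
  rw [Vpot]
  linarith

theorem hasDerivAt_vpot (θ s t : ℝ) : HasDerivAt (fun x => Vpot θ x t) (-sin θ) s := by
  simpa [Vpot] using ((hasDerivAt_id s).mul_const (sin θ)).const_sub (t * cos θ)

namespace RapidDecay

variable {f g : ℝ → ℝ → ℝ}

theorem mul (hf : RapidDecay f) (hg : RapidDecay g) : RapidDecay fun s t => f s t * g s t := by
  refine ⟨hf.continuous.mul hg.continuous, fun n => ?_⟩
  obtain ⟨C, hC⟩ := hf.bound n
  obtain ⟨D, hD⟩ := hg.bound 0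
  refine ⟨C * D, fun s t ht => ?_⟩
  have hg' : |g s t| ≤ D := by simpa using hD s t ht
  calc |f s t * g s t| ≤ C * (1 + |s| + t) ^ (-(n : ℝ)) * D := by
        rw [abs_mul]
        exact mul_le_mul (hC s t ht) hg' (abs_nonneg _) ((abs_nonneg _).trans (hC s t ht))
    _ = C * D * (1 + |s| + t) ^ (-(n : ℝ)) := by ring

theorem vpot_mul (hf : RapidDecay f) (θ : ℝ) : RapidDecay fun s t => Vpot θ s t * f s t := by
  refine ⟨(continuous_snd.mul continuous_const |>.sub <| continuous_fst.mul continuous_const).mul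
    hf.continuous, fun n => ?_⟩
  obtain ⟨C, hC⟩ := hf.bound (n + 1)
  refine ⟨C, fun s t ht => ?_⟩
  have hb : 0 < 1 + |s| + t := by positivity
  calc |Vpot θ s t * f s t| ≤ (1 + |s| + t) * (C * (1 + |s| + t) ^ (-((n + 1 : ℕ) : ℝ))) := by
        rw [abs_mul]
        exact mul_le_mul (abs_vpot_le θ ht) (hC s t ht) (abs_nonneg _) hb.le
    _ = C * (1 + |s| + t) ^ (-(n : ℝ)) := by
        rw [show -(n : ℝ) = -((n + 1 : ℕ) : ℝ) + 1 by push_cast; ring, rpow_add_one hb.ne']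
        ring

theorem vpot_pow_mul (hf : RapidDecay f) (θ : ℝ) (n : ℕ) :
    RapidDecay fun s t => Vpot θ s t ^ n * f s t := by
  induction n with
  | zero => simpa using hf
  | succ n ih => simpa only [pow_succ', mul_assoc] using ih.vpot_mul θ

theorem integrableHalf (hf : RapidDecay f) : IntegrableHalf f := by
  obtain ⟨C, hC⟩ := hf.bound 3
  have hdom : Integrable (fun p : ℝ × ℝ => |C| * (1 + ‖p‖) ^ (-(3 : ℝ))) halfPlane := by
    rw [halfPlane_eq_restrict]
    exact ((integrable_one_add_norm (by norm_num)).const_mul _).restrict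
  refine hdom.mono' hf.continuous.aestronglyMeasurable ?_
  rw [halfPlane_eq_restrict]
  filter_upwards [ae_restrict_mem (MeasurableSet.univ.prod measurableSet_Ioi)] with ⟨s, t⟩ hp
  have ht : 0 ≤ t := le_of_lt hp.2
  have hnorm : 1 + ‖(s, t)‖ ≤ 1 + |s| + t := by
    rw [Prod.norm_mk, Real.norm_eq_abs, Real.norm_eq_abs, abs_of_nonneg ht]
    linarith [max_le_add_of_nonneg (abs_nonneg s) ht]
  calc ‖uncurry f (s, t)‖ ≤ C * (1 + |s| + t) ^ (-((3 : ℕ) : ℝ)) := hC s t ht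
    _ ≤ |C| * (1 + |s| + t) ^ (-(3 : ℝ)) := by
        push_cast; exact mul_le_mul_of_nonneg_right (le_abs_self C) (by positivity)
    _ ≤ |C| * (1 + ‖(s, t)‖) ^ (-(3 : ℝ)) :=
        mul_le_mul_of_nonneg_left (rpow_le_rpow_of_nonpos (by positivity) hnorm (by norm_num))
          (abs_nonneg C)

end RapidDecay

namespace IntegrableHalf

variable {f g : ℝ → ℝ → ℝ}

theorem add (hf : IntegrableHalf f) (hg : IntegrableHalf g) :
    IntegrableHalf fun s t => f s t + g s t :=
  Integrable.add hf hg

theorem sub (hf : IntegrableHalf f) (hg : IntegrableHalf g) :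
    IntegrableHalf fun s t => f s t - g s t :=
  Integrable.sub hf hg

theorem const_mul (hf : IntegrableHalf f) (c : ℝ) : IntegrableHalf fun s t => c * f s t :=
  Integrable.const_mul hf c

end IntegrableHalf

section Integrals

variable {f g F G : ℝ → ℝ → ℝ}

theorem intHalf_eq_integral (hf : IntegrableHalf f) :
    intHalf f = ∫ p, uncurry f p ∂halfPlane :=
  (integral_prod _ hf).symm

theorem intHalf_add (hf : IntegrableHalf f) (hg : IntegrableHalf g) :
    intHalf (fun s t => f s t + g s t) = intHalf f + intHalf g := by
  rw [intHalf_eq_integral hf, intHalf_eq_integral hg, intHalf_eq_integral (hf.add hg)]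
  exact integral_add hf hg

theorem intHalf_sub (hf : IntegrableHalf f) (hg : IntegrableHalf g) :
    intHalf (fun s t => f s t - g s t) = intHalf f - intHalf g := by
  rw [intHalf_eq_integral hf, intHalf_eq_integral hg, intHalf_eq_integral (hf.sub hg)]
  exact integral_sub hf hg

theorem intHalf_const_mul (c : ℝ) : intHalf (fun s t => c * f s t) = c * intHalf f := by
  simp only [intHalf, integral_const_mul]

theorem intHalf_congr (h : ∀ s t, 0 < t → f s t = g s t) : intHalf f = intHalf g := by
  unfold intHalf
  congr 1 with s
  exact setIntegral_congr_fun measurableSet_Ioi fun t ht => h s t ht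

theorem intHalf_eq_zero_of_hasDerivAt_fst (hF : IntegrableHalf F) (hG : IntegrableHalf G)
    (hFG : ∀ s t, HasDerivAt (fun x => F x t) (G s t) s) : intHalf G = 0 := by
  rw [intHalf, integral_integral_swap hG]
  refine integral_eq_zero_of_ae ?_
  filter_upwards [Integrable.prod_left_ae hF, Integrable.prod_left_ae hG] with t hFt hGt
  exact integral_eq_zero_of_hasDerivAt_of_integrable (fun s => hFG s t) hGt hFt

theorem intHalf_eq_zero_of_hasDerivAt_snd (hF : IntegrableHalf F) (hG : IntegrableHalf G)
    (hFG : ∀ s t, HasDerivAt (fun y => F s y) (G s t) t) (hF0 : ∀ s, F s 0 = 0) :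
    intHalf G = 0 := by
  refine integral_eq_zero_of_ae ?_
  filter_upwards [Integrable.prod_right_ae hF, Integrable.prod_right_ae hG] with s hFs hGs
  have hlim := tendsto_zero_of_hasDerivAt_of_integrableOn_Ioi (fun t _ => hFG s t) hGs hFs
  simpa [hF0 s] using integral_Ioi_of_hasDerivAt_of_tendsto' (fun t _ => hFG s t) hGs hlim

end Integrals

theorem RapidDecay.integrableHalf_vpot_pow_mul_mul {f g : ℝ → ℝ → ℝ} (hf : RapidDecay f)
    (hg : RapidDecay g) (θ : ℝ) (n : ℕ) :
    IntegrableHalf fun s t => Vpot θ s t ^ n * f s t * g s t :=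
  ((hf.vpot_pow_mul θ n).mul hg).integrableHalf

structure SmoothSchwartzHalf (u : ℝ → ℝ → ℝ) : Prop where
  contDiff : ContDiff ℝ ∞ (uncurry u)
  schwartz : SchwartzHalf u

namespace SmoothSchwartzHalf

variable {f g : ℝ → ℝ → ℝ}

theorem differentiable (hf : SmoothSchwartzHalf f) : Differentiable ℝ (uncurry f) :=
  hf.contDiff.differentiable (by simp)

theorem rapidDecay (hf : SmoothSchwartzHalf f) : RapidDecay f :=
  ⟨hf.contDiff.continuous, hf.schwartz 0 0⟩

theorem pd1 (hf : SmoothSchwartzHalf f) : SmoothSchwartzHalf (_root_.pd1 f) :=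
  ⟨hf.contDiff.uncurry_pd1, fun k l => by
    simpa only [pd2_iterate_pd1 hf.contDiff, ← iterate_succ_apply] using hf.schwartz (k + 1) l⟩

theorem pd2 (hf : SmoothSchwartzHalf f) : SmoothSchwartzHalf (_root_.pd2 f) :=
  ⟨hf.contDiff.uncurry_pd2, fun k l => hf.schwartz k (l + 1)⟩

end SmoothSchwartzHalf

section IntegrationByParts

variable {f g : ℝ → ℝ → ℝ}

/-- For `n = 0` the truncated exponent `n - 1` is harmless, as its coefficient vanishes. -/
theorem intHalf_vpot_pow_mul_pd1_mul_add (θ : ℝ) (n : ℕ) (hf : SmoothSchwartzHalf f)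
    (hg : SmoothSchwartzHalf g) :
    intHalf (fun s t => Vpot θ s t ^ n * pd1 f s t * g s t) +
        intHalf (fun s t => Vpot θ s t ^ n * pd1 g s t * f s t) =
      n * sin θ * intHalf (fun s t => Vpot θ s t ^ (n - 1) * f s t * g s t) := by
  have hI₁ := hf.pd1.rapidDecay.integrableHalf_vpot_pow_mul_mul hg.rapidDecay θ n
  have hI₂ := hg.pd1.rapidDecay.integrableHalf_vpot_pow_mul_mul hf.rapidDecay θ n
  have hI₀ := hf.rapidDecay.integrableHalf_vpot_pow_mul_mul hg.rapidDecay θ (n - 1)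
  have hF := hf.rapidDecay.integrableHalf_vpot_pow_mul_mul hg.rapidDecay θ n
  have h := intHalf_eq_zero_of_hasDerivAt_fst hF ((hI₁.add hI₂).sub (hI₀.const_mul (n * sin θ)))
    fun s t => ((((hasDerivAt_vpot θ s t).fun_pow n).fun_mul
      (hasDerivAt_pd1 (hf.differentiable _))).fun_mul
        (hasDerivAt_pd1 (hg.differentiable _))).congr_deriv (by ring)
  rw [intHalf_sub (hI₁.add hI₂) (hI₀.const_mul _), intHalf_add hI₁ hI₂, intHalf_const_mul] at h
  linarith

theorem intHalf_pd1_mul_self (hf : SmoothSchwartzHalf f) :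
    intHalf (fun s t => pd1 f s t * f s t) = 0 := by
  simpa using intHalf_vpot_pow_mul_pd1_mul_add 0 0 hf hf

theorem intHalf_vpot_mul_pd1_mul_self (θ : ℝ) (hf : SmoothSchwartzHalf f) :
    intHalf (fun s t => Vpot θ s t * pd1 f s t * f s t) =
      sin θ / 2 * intHalf (fun s t => f s t ^ 2) := by
  have h := intHalf_vpot_pow_mul_pd1_mul_add θ 1 hf hf
  simp only [pow_one, Nat.sub_self, pow_zero, one_mul, Nat.cast_one, ← pow_two] at h
  linarith

theorem intHalf_vpot_sq_mul_pd1_mul_self (θ : ℝ) (hf : SmoothSchwartzHalf f) :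
    intHalf (fun s t => Vpot θ s t ^ 2 * pd1 f s t * f s t) =
      sin θ * intHalf (fun s t => Vpot θ s t * f s t * f s t) := by
  have h := intHalf_vpot_pow_mul_pd1_mul_add θ 2 hf hf
  simp only [Nat.add_one_sub_one, pow_one, Nat.cast_ofNat] at h
  linarith

theorem intHalf_vpot_mul_pd1_pd1_mul (θ : ℝ) (hf : SmoothSchwartzHalf f) :
    intHalf (fun s t => Vpot θ s t * pd1 (pd1 f) s t * f s t) =
      -intHalf (fun s t => Vpot θ s t * pd1 f s t * pd1 f s t) := by
  have h := intHalf_vpot_pow_mul_pd1_mul_add θ 1 hf.pd1 hf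
  simp only [pow_one, Nat.sub_self, pow_zero, one_mul, Nat.cast_one, intHalf_pd1_mul_self hf,
    mul_zero] at h
  linarith

theorem intHalf_pd2_mul_add (hf : SmoothSchwartzHalf f) (hg : SmoothSchwartzHalf g)
    (hf0 : ∀ s, f s 0 = 0) :
    intHalf (fun s t => pd2 f s t * g s t) + intHalf (fun s t => pd2 g s t * f s t) = 0 := by
  have hI₁ := (hf.pd2.rapidDecay.mul hg.rapidDecay).integrableHalf
  have hI₂ := (hg.pd2.rapidDecay.mul hf.rapidDecay).integrableHalf
  rw [← intHalf_add hI₁ hI₂]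
  refine intHalf_eq_zero_of_hasDerivAt_snd (hf.rapidDecay.mul hg.rapidDecay).integrableHalf
    (hI₁.add hI₂) (fun s t => ?_) (by simp [hf0])
  refine ((hasDerivAt_pd2 (hf.differentiable _)).fun_mul
    (hasDerivAt_pd2 (hg.differentiable _))).congr_deriv ?_
  ring

end IntegrationByParts

theorem pd1_pd2_pd2_of_eigen {θ σ : ℝ} {u : ℝ → ℝ → ℝ} (hu : ContDiff ℝ ∞ (uncurry u)) {t : ℝ}
    (heq : ∀ x, Hop θ u x t = σ * u x t) (s : ℝ) :
    pd1 (pd2 (pd2 u)) s t = Vpot θ s t ^ 2 * pd1 u s t - 2 * sin θ * (Vpot θ s t * u s t) -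
      (pd1 (pd1 (pd1 u)) s t + σ * pd1 u s t) := by
  have htt : (fun x => pd2 (pd2 u) x t) =
      fun x => Vpot θ x t ^ 2 * u x t - pd1 (pd1 u) x t - σ * u x t := by
    ext x
    have := heq x
    rw [Hop] at this
    linarith
  have hd₁ := hasDerivAt_pd1 (hu.differentiable (by simp) (s, t))
  have hd₃ := hasDerivAt_pd1 (hu.uncurry_pd1.uncurry_pd1.differentiable (by simp) (s, t))
  have hd := ((((hasDerivAt_vpot θ s t).fun_pow 2).fun_mul hd₁).fun_sub hd₃).fun_sub
    (hd₁.const_mul σ)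
  change deriv (fun x => pd2 (pd2 u) x t) s = _
  rw [htt, hd.deriv]
  push_cast
  ring

theorem intHalf_pd1_pd2_pd2_mul_of_eigen {θ σ : ℝ} {u : ℝ → ℝ → ℝ} (hu : SmoothSchwartzHalf u)
    (heig : ∀ s t, 0 ≤ t → Hop θ u s t = σ * u s t) :
    intHalf (fun s t => pd1 (pd2 (pd2 u)) s t * pd1 (pd1 u) s t) =
      3 * sin θ * intHalf (fun s t => Vpot θ s t * pd1 u s t * pd1 u s t) := by
  have hu₁ := hu.pd1
  have hu₂ := hu₁.pd1
  have hA := hu₂.rapidDecay.integrableHalf_vpot_pow_mul_mul hu₁.rapidDecay θ 2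
  have hB := ((hu₂.rapidDecay.vpot_mul θ).mul hu.rapidDecay).integrableHalf
  have hC := (hu₂.pd1.rapidDecay.mul hu₂.rapidDecay).integrableHalf
  have hD := (hu₂.rapidDecay.mul hu₁.rapidDecay).integrableHalf
  have hexp := intHalf_congr (f := fun s t => pd1 (pd2 (pd2 u)) s t * pd1 (pd1 u) s t)
    (g := fun s t => Vpot θ s t ^ 2 * pd1 (pd1 u) s t * pd1 u s t -
      2 * sin θ * (Vpot θ s t * pd1 (pd1 u) s t * u s t) -
      (pd1 (pd1 (pd1 u)) s t * pd1 (pd1 u) s t + σ * (pd1 (pd1 u) s t * pd1 u s t)))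
    fun s t ht => by rw [pd1_pd2_pd2_of_eigen hu.contDiff (fun x => heig x t ht.le) s]; ring
  rw [hexp, intHalf_sub (hA.sub (hB.const_mul _)) (hC.add (hD.const_mul σ)),
    intHalf_sub hA (hB.const_mul _), intHalf_add hC (hD.const_mul σ), intHalf_const_mul,
    intHalf_const_mul, intHalf_vpot_sq_mul_pd1_mul_self θ hu₁, intHalf_vpot_mul_pd1_pd1_mul θ hu,
    intHalf_pd1_mul_self hu₂, intHalf_pd1_mul_self hu₁]
  ring

theorem intHalf_pd1_pd2_pd2_mul_eq_zero {u : ℝ → ℝ → ℝ} (hu : SmoothSchwartzHalf u)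
    (hN : ∀ s, pd2 u s 0 = 0) :
    intHalf (fun s t => pd1 (pd2 (pd2 u)) s t * pd1 (pd1 u) s t) = 0 := by
  have h0 : ∀ s, pd1 (pd2 u) s 0 = 0 := fun s => by
    simp [pd1, show (fun x => pd2 u x 0) = fun _ => 0 from funext hN]
  have h := intHalf_pd2_mul_add hu.pd2.pd1 hu.pd1.pd1 h0
  rwa [pd2_pd1 hu.pd2.contDiff, pd2_pd1 hu.pd1.contDiff, pd2_pd1 hu.contDiff,
    intHalf_pd1_mul_self hu.pd2.pd1, add_zero] at h

/-- `∫ V_θ ∂_s u · u = (sin θ)/2` and `∫ V_θ ∂_s²u · u = 0`. -/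
theorem Vds_identities (θ : ℝ) (hθ : θ ∈ Set.Ioo 0 (π/2))
    (u : ℝ → ℝ → ℝ) (σ : ℝ) (hu : IsModelEigen θ u σ) :
    intHalf (fun s t => Vpot θ s t * pd1 u s t * u s t) = Real.sin θ / 2 ∧
    intHalf (fun s t => Vpot θ s t * pd1 (pd1 u) s t * u s t) = 0 := by
  have hu' : SmoothSchwartzHalf u := ⟨contDiff_infty.mpr hu.smooth, hu.schwartz⟩
  have hsin : sin θ ≠ 0 := (sin_pos_of_pos_of_lt_pi hθ.1 (by linarith [hθ.2, pi_pos])).ne'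
  have hX : intHalf (fun s t => Vpot θ s t * pd1 u s t * pd1 u s t) = 0 := by
    have h := (intHalf_pd1_pd2_pd2_mul_of_eigen hu' hu.eigen).symm.trans
      (intHalf_pd1_pd2_pd2_mul_eq_zero hu' hu.neumann)
    simpa [hsin] using h
  refine ⟨?_, ?_⟩
  · rw [intHalf_vpot_mul_pd1_mul_self θ hu', hu.normalized, mul_one]
  · rw [intHalf_vpot_mul_pd1_pd1_mul θ hu', hX, neg_zero]
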